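/- Let n ≥ 2. If [GAL_a^s] holds, then [GAL] holds. -/

import Mathlib

open Set Metric Filter

noncomputable section

/-- `E n` is `ℂⁿ` with the Euclidean norm. -/
abbrev E (n : ℕ) := EuclideanSpace ℂ (Fin n)

/-- A map is univalent on `D` if it is holomorphic and injective on `D`. -/
def Univalent {n : ℕ} (f : E n → E n) (D : Set (E n)) : Prop :=
  DifferentiableOn ℂ f D ∧ Set.InjOn f D

/-- The class `S` of normalized univalent maps of the unit ball. -/
def classS (n : ℕ) : Set (E n → E n) :=
  {f | Univalent f (ball 0 1) ∧ f 0 = 0 ∧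
    fderiv ℂ f 0 = ContinuousLinearMap.id ℂ (E n)}

/-- The class `S(ℂⁿ)` of normalized entire univalent maps. -/
def classSC (n : ℕ) : Set (E n → E n) :=
  {Ψ | Differentiable ℂ Ψ ∧ Function.Injective Ψ ∧ Ψ 0 = 0 ∧
    fderiv ℂ Ψ 0 = ContinuousLinearMap.id ℂ (E n)}

/-- A normalized Loewner chain on the unit ball. -/
def IsLoewnerChain {n : ℕ} (f : ℝ → E n → E n) : Prop :=
  ContinuousOn (fun p : ℝ × E n => f p.1 p.2) (Ici 0 ×ˢ ball 0 1) ∧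
  (∀ t, 0 ≤ t → Univalent (f t) (ball 0 1)) ∧
  (∀ s t, 0 ≤ s → s ≤ t → f s '' ball 0 1 ⊆ f t '' ball 0 1) ∧
  (∀ t, 0 ≤ t → f t 0 = 0 ∧
    fderiv ℂ (f t) 0 = (Real.exp t : ℂ) • ContinuousLinearMap.id ℂ (E n))

/-- The class `S¹` of maps embedding into a normalized Loewner chain. -/
def classS1 (n : ℕ) : Set (E n → E n) :=
  {f | f ∈ classS n ∧ ∃ F : ℝ → E n → E n, IsLoewnerChain F ∧
    Set.EqOn (F 0) f (ball 0 1)}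

/-- Uniform convergence on all compact subsets of `D`. -/
def ConvUnifOnCompacts {α β : Type*} [TopologicalSpace α] [UniformSpace β]
    (F : ℕ → α → β) (f : α → β) (D : Set α) : Prop :=
  ∀ K, K ⊆ D → IsCompact K → TendstoUniformlyOn F f atTop K

/-- `(D, Ω)` is a Runge pair. -/
def RungePair {n : ℕ} (D Ω : Set (E n)) : Prop :=
  D ⊆ Ω ∧ ∀ h : E n → ℂ, DifferentiableOn ℂ h D →
    ∃ g : ℕ → E n → ℂ, (∀ k, DifferentiableOn ℂ (g k) Ω) ∧
      ConvUnifOnCompacts g h D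

/-- `D` is Runge in `ℂⁿ`. -/
def IsRunge {n : ℕ} (D : Set (E n)) : Prop := RungePair D univ

/-- An automorphism of `ℂⁿ`. -/
def IsAutomorphism {n : ℕ} (Φ : E n → E n) : Prop :=
  Differentiable ℂ Φ ∧ Function.Bijective Φ

/-- A normalized automorphism of `ℂⁿ`. -/
def IsNormalizedAutomorphism {n : ℕ} (Φ : E n → E n) : Prop :=
  IsAutomorphism Φ ∧ Φ 0 = 0 ∧ fderiv ℂ Φ 0 = ContinuousLinearMap.id ℂ (E n)

/-- `Ω` is biholomorphic to `ℂⁿ`. -/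
def BiholToCn {n : ℕ} (Ω : Set (E n)) : Prop :=
  ∃ Ψ : E n → E n, Differentiable ℂ Ψ ∧ Function.Injective Ψ ∧ Set.range Ψ = Ω

/-- A Fatou–Bieberbach domain: a proper subdomain of `ℂⁿ` biholomorphic to `ℂⁿ`. -/
def IsFatouBieberbach {n : ℕ} (Ω : Set (E n)) : Prop :=
  Ω ≠ univ ∧ BiholToCn Ω

/-- The rescaling `f_r(z) = (1/r) f (r z)`. -/
def rescale {n : ℕ} (f : E n → E n) (r : ℝ) (z : E n) : E n :=
  (r : ℂ)⁻¹ • f ((r : ℂ) • z)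

/-- The Loewner range of a chain. -/
def LoewnerRange {n : ℕ} (f : ℝ → E n → E n) : Set (E n) :=
  ⋃ u ∈ Ici (0 : ℝ), f u '' ball 0 1

/-- (AL): the Andersén–Lempert approximation theorem for maps in `S` with Runge image. -/
def AL (n : ℕ) : Prop :=
  ∀ f ∈ classS n, IsRunge (f '' ball 0 1) →
    ∃ Φ : ℕ → E n → E n, (∀ k, IsNormalizedAutomorphism (Φ k)) ∧
      ConvUnifOnCompacts Φ f (ball (0 : E n) 1)

/-- (AL'): every univalent map of the ball with Runge image is approximable by
automorphisms of `ℂⁿ`. -/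
def AL' (n : ℕ) : Prop :=
  ∀ g : E n → E n, Univalent g (ball 0 1) → IsRunge (g '' ball 0 1) →
    ∃ Φ : ℕ → E n → E n, (∀ k, IsAutomorphism (Φ k)) ∧
      ConvUnifOnCompacts Φ g (ball (0 : E n) 1)

/-- (AL-nec): a map in `S` approximable by automorphisms of `ℂⁿ` has Runge image. -/
def ALnec (n : ℕ) : Prop :=
  ∀ f ∈ classS n,
    (∃ Φ : ℕ → E n → E n, (∀ k, IsAutomorphism (Φ k)) ∧
      ConvUnifOnCompacts Φ f (ball (0 : E n) 1)) →
    IsRunge (f '' ball 0 1)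

/-- [GAL]: every `f ∈ S` with non-Runge image is approximable by entire univalent maps. -/
def GAL (n : ℕ) : Prop :=
  ∀ f ∈ classS n, ¬ IsRunge (f '' ball 0 1) →
    ∃ Ψ : ℕ → E n → E n, (∀ k, Differentiable ℂ (Ψ k) ∧ Function.Injective (Ψ k)) ∧
      ConvUnifOnCompacts Ψ f (ball (0 : E n) 1)

/-- [EXT]: every `f ∈ S` extending univalently past the closed ball is in `S¹`. -/
def EXT (n : ℕ) : Prop :=
  ∀ f ∈ classS n,
    (∃ r > (1 : ℝ), ∃ F : E n → E n, Univalent F (ball 0 r) ∧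
      Set.EqOn F f (ball 0 1)) →
    f ∈ classS1 n

/-- [FBR]: every domain biholomorphic to the ball and not Runge in `ℂⁿ` sits in a
Fatou–Bieberbach domain in a Runge way. -/
def FBR (n : ℕ) : Prop :=
  ∀ D : Set (E n), IsOpen D →
    (∃ g : E n → E n, Univalent g (ball 0 1) ∧ g '' ball 0 1 = D) →
    ¬ IsRunge D →
    ∃ Ω : Set (E n), IsFatouBieberbach Ω ∧ D ⊆ Ω ∧ RungePair D Ω

/-- [GALˢ]: strong generalized Andersén–Lempert. -/
def GALs (n : ℕ) : Prop :=
  ∀ f ∈ classS n, ¬ IsRunge (f '' ball 0 1) →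
    ∃ Ω : Set (E n), IsFatouBieberbach Ω ∧
      ∃ Ψ : ℕ → E n → E n, (∀ k, Ψ k ∈ classSC n ∧ Set.range (Ψ k) = Ω) ∧
        ConvUnifOnCompacts Ψ f (ball (0 : E n) 1)

/-- [FBRₐ]. -/
def FBRa (n : ℕ) : Prop :=
  ∀ f ∈ classS n, ∀ r ∈ Ioo (0 : ℝ) 1,
    ∃ Ω : Set (E n), BiholToCn Ω ∧ f '' ball 0 r ⊆ Ω ∧
      RungePair (f '' ball 0 r) Ω

/-- [GALₐˢ]. -/
def GALas (n : ℕ) : Prop :=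
  ∀ f ∈ classS n, ¬ IsRunge (f '' ball 0 1) → ∀ r ∈ Ioo (0 : ℝ) 1,
    ∃ Ω : Set (E n), IsFatouBieberbach Ω ∧
      ∃ Ψ : ℕ → E n → E n, (∀ k, Ψ k ∈ classSC n ∧ Set.range (Ψ k) = Ω) ∧
        ConvUnifOnCompacts Ψ (rescale f r) (ball (0 : E n) 1)

/-- A domain is entire-convexshapelike if some entire univalent map pulls it back to
a convex set. -/
def EntireConvexshapelike {n : ℕ} (Ω : Set (E n)) : Prop :=
  ∃ Ψ : E n → E n, Differentiable ℂ Ψ ∧ Function.Injective Ψ ∧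
    Ω ⊆ Set.range Ψ ∧ Convex ℝ (Ψ ⁻¹' Ω)

/-- `S¹` is dense in `S` for uniform convergence on compacta. -/
def DenseS1 (n : ℕ) : Prop :=
  ∀ f ∈ classS n, ∃ g : ℕ → E n → E n, (∀ k, g k ∈ classS1 n) ∧
    ConvUnifOnCompacts g f (ball (0 : E n) 1)

/-!
Since `f` is continuous on the ball, the rescalings `f_r` converge to `f` uniformly on compact
subsets of `𝔹ⁿ` as `r → 1⁻`. Each `f_r` is in turn a limit of univalent entire maps by [GALₐˢ],
so `f` is approximated on every compact set, to any precision, by univalent entire maps; a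
diagonal sequence along the exhaustion of `𝔹ⁿ` by closed balls then converges to `f`.
-/

open Topology

lemma exists_mem_forall_dist_lt_of_tendstoUniformlyOn {α β ι : Type*} [PseudoMetricSpace β]
    {𝒜 : Set (α → β)} {f : α → β}
    {G : ι → α → β} {l : Filter ι} [l.NeBot] {K : Set α}
    (hG : TendstoUniformlyOn G f l K)
    (happrox : ∀ᶠ i in l, ∃ F : ℕ → α → β, (∀ k, F k ∈ 𝒜) ∧ TendstoUniformlyOn F (G i) atTop K)
    {ε : ℝ} (hε : 0 < ε) :
    ∃ g ∈ 𝒜, ∀ z ∈ K, dist (g z) (f z) < ε := by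
  obtain ⟨i, hGi, F, hF𝒜, hF⟩ :=
    ((Metric.tendstoUniformlyOn_iff.1 hG _ (half_pos hε)).and happrox).exists
  obtain ⟨k, hk⟩ := (Metric.tendstoUniformlyOn_iff.1 hF _ (half_pos hε)).exists
  refine ⟨F k, hF𝒜 k, fun z hz => ?_⟩
  calc dist (F k z) (f z) ≤ dist (G i z) (F k z) + dist (f z) (G i z) := by
        rw [dist_comm (G i z), dist_comm (f z)]; exact dist_triangle _ _ _
    _ < ε / 2 + ε / 2 := add_lt_add (hk z hz) (hGi z hz)
    _ = ε := add_halves ε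

lemma exists_seq_convUnifOnCompacts_ball {α β : Type*} [MetricSpace α] [ProperSpace α]
    [PseudoMetricSpace β] {𝒜 : Set (α → β)} {f : α → β}
    {x : α} {R : ℝ}
    (happrox : ∀ ρ < R, ∀ ε > 0, ∃ g ∈ 𝒜, ∀ z ∈ closedBall x ρ, dist (g z) (f z) < ε) :
    ∃ g : ℕ → α → β, (∀ k, g k ∈ 𝒜) ∧ ConvUnifOnCompacts g f (ball x R) := by
  have hδ : ∀ k : ℕ, (0 : ℝ) < 1 / (k + 1) := fun k => by positivity
  choose g hg𝒜 hg using fun k : ℕ => happrox (R - 1 / (k + 1)) (by linarith [hδ k]) _ (hδ k)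
  refine ⟨g, hg𝒜, fun K hK hKc => Metric.tendstoUniformlyOn_iff.2 fun ε hε => ?_⟩
  obtain ⟨r, hrR, hKr⟩ := exists_lt_subset_ball hKc.isClosed hK
  filter_upwards [tendsto_one_div_add_atTop_nhds_zero_nat.eventually (gt_mem_nhds hε),
    tendsto_one_div_add_atTop_nhds_zero_nat.eventually (gt_mem_nhds (sub_pos.2 hrR))]
    with k hkε hkr z hz
  have hzk : z ∈ closedBall x (R - 1 / (k + 1)) :=
    ball_subset_closedBall (ball_subset_ball (by linarith) (hKr hz))
  rw [dist_comm]
  exact (hg k z hzk).trans hkε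

section Rescale

variable {n : ℕ}

lemma rescale_one (f : E n → E n) : rescale f 1 = f := by
  ext1 z
  simp [rescale]

lemma continuousOn_rescale {f : E n → E n} {s : Set (E n)} (hf : ContinuousOn f s) :
    ContinuousOn ↿(rescale f) {p | p.1 ≠ 0 ∧ (p.1 : ℂ) • p.2 ∈ s} := by
  have hr : Continuous fun p : ℝ × E n => (p.1 : ℂ) :=
    Complex.continuous_ofReal.comp continuous_fst
  refine ContinuousOn.smul (hr.continuousOn.inv₀ fun p hp => by exact_mod_cast hp.1) ?_
  exact hf.comp (hr.smul continuous_snd).continuousOn fun p hp => hp.2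

lemma Icc_prod_closedBall_subset_smul_mem_ball {ρ : ℝ} (hρ : ρ < 1) :
    Icc (1 / 2 : ℝ) 1 ×ˢ closedBall (0 : E n) ρ ⊆
      {p : ℝ × E n | p.1 ≠ 0 ∧ (p.1 : ℂ) • p.2 ∈ ball 0 1} := by
  rintro ⟨r, z⟩ ⟨⟨hr₀, hr₁⟩, hz⟩
  rw [mem_closedBall_zero_iff] at hz
  refine ⟨by linarith, mem_ball_zero_iff.2 ?_⟩
  rw [norm_smul, Complex.norm_real, Real.norm_of_nonneg (by linarith)]
  nlinarith [norm_nonneg z]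

lemma tendstoLocallyUniformlyOn_rescale {f : E n → E n} (hf : ContinuousOn f (ball 0 1)) :
    TendstoLocallyUniformlyOn (rescale f) f (𝓝[<] 1) (ball 0 1) := by
  rw [tendstoLocallyUniformlyOn_iff_forall_isCompact isOpen_ball]
  intro K hK hKc
  obtain ⟨ρ, hρ, hKρ⟩ := exists_lt_subset_ball hKc.isClosed hK
  have hunif := IsCompact.uniformContinuousOn_of_continuous
    (isCompact_Icc.prod (isCompact_closedBall (0 : E n) ρ))
    ((continuousOn_rescale hf).mono (Icc_prod_closedBall_subset_smul_mem_ball hρ))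
  have hlim : TendstoUniformlyOn (rescale f) f (𝓝[Icc (1 / 2) 1] 1) (closedBall 0 ρ) := by
    simpa only [rescale_one] using hunif.tendstoUniformlyOn (x := 1) (by norm_num)
  have hle : 𝓝[<] (1 : ℝ) ≤ 𝓝[Icc (1 / 2) 1] 1 :=
    nhdsWithin_le_iff.2 (Icc_mem_nhdsLT (by norm_num))
  exact TendstoUniformlyOn.mono (fun u hu => (hlim u hu).filter_mono hle)
    (hKρ.trans ball_subset_closedBall)

end Rescale

theorem stmt9_general (n : ℕ) (hGALas : GALas n) : GAL n := by
  intro f hf hnR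
  refine exists_seq_convUnifOnCompacts_ball
    (𝒜 := {Ψ | Differentiable ℂ Ψ ∧ Function.Injective Ψ}) fun ρ hρ ε hε => ?_
  have hK : closedBall (0 : E n) ρ ⊆ ball 0 1 := closedBall_subset_ball hρ
  have hKc : IsCompact (closedBall (0 : E n) ρ) := isCompact_closedBall 0 ρ
  refine exists_mem_forall_dist_lt_of_tendstoUniformlyOn
    ((tendstoLocallyUniformlyOn_iff_forall_isCompact isOpen_ball).1
      (tendstoLocallyUniformlyOn_rescale hf.1.1.continuousOn) _ hK hKc) ?_ hε
  filter_upwards [Ioo_mem_nhdsLT zero_lt_one] with r hr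
  obtain ⟨_, -, Ψ, hΨ, hconv⟩ := hGALas f hf hnR r hr
  exact ⟨Ψ, fun k => ⟨(hΨ k).1.1, (hΨ k).1.2.1⟩, hconv _ hK hKc⟩

/-- [GALₐˢ] implies [GAL]. -/
theorem stmt9 (n : ℕ) (hn : 2 ≤ n) (hGALas : GALas n) : GAL n :=
  stmt9_general n hGALas
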